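/- Let n, r be integers with 1 ≤ r ≤ n and let f : [0,1] → ℝ be (r+2) times continuously differentiable. Then ‖ ((n+r+1)!(n−r)!/((n+1)! n!)) · (M_n f)^{(r)} − M_{n−r}(f^{(r)}) ‖ ≤ (1/4)·‖f^{(r+2)}‖·(n+3)/((n+3)² − r²) + ω(f^{(r)}, r(n−r)/((n+2)² − r²)). -/

import Mathlib

/-- Bernstein basis polynomial `p_{n,k}(x) = C(n,k) x^k (1-x)^{n-k}`. -/
noncomputable def bern (n k : ℕ) (x : ℝ) : ℝ :=
  (n.choose k : ℝ) * x ^ k * (1 - x) ^ (n - k)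

/-- Classical Durrmeyer operator
`M_n(f;x) = (n+1) Σ_{k=0}^n p_{n,k}(x) ∫₀¹ p_{n,k}(t) f(t) dt`. -/
noncomputable def durrmeyer (n : ℕ) (f : ℝ → ℝ) (x : ℝ) : ℝ :=
  ((n : ℝ) + 1) * ∑ k ∈ Finset.range (n + 1),
    bern n k x * ∫ t in (0:ℝ)..1, bern n k t * f t

/-- Supremum norm on `[0,1]`. -/
noncomputable def supNorm (g : ℝ → ℝ) : ℝ :=
  ⨆ x : Set.Icc (0:ℝ) 1, |g x|

/-- First modulus of continuity on `[0,1]`. -/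
noncomputable def modCont (g : ℝ → ℝ) (δ : ℝ) : ℝ :=
  sSup {d : ℝ | ∃ x ∈ Set.Icc (0:ℝ) 1, ∃ y ∈ Set.Icc (0:ℝ) 1, |x - y| ≤ δ ∧ d = |g x - g y|}

/-!
Differentiating `M_n f` `r` times, each step an integration by parts against a Bernstein
polynomial, turns the normalised derivative into
`(n+r+1) Σ_k p_{n-r,k}(x) ∫ p_{n+r,k+r} g` with `g = f^{(r)}`, so the difference is a convex
combination of the numbers `(n+r+1) ∫ p_{n+r,k+r} g - (n-r+1) ∫ p_{n-r,k} g`.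
The probability density `(b+1) p_{b,k}` on `[0,1]` has mean `μ = (k+1)/(b+2)` and variance
`μ(1-μ)/(b+3) ≤ 1/(4(b+3))`, so by Taylor's formula at `μ` the average `(b+1) ∫ p_{b,k} g` lies
within `‖g''‖/(8(b+3))` of `g(μ)`. For `b = n ± r` the two means differ by at most
`r(n-r)/((n+2)^2-r^2)`, which gives the modulus-of-continuity term, and
`1/(8(n+r+3)) + 1/(8(n-r+3)) = (n+3)/(4((n+3)^2-r^2))`.
-/

open Finset intervalIntegral Set
open scoped Nat

lemma bern_eq_eval (n k : ℕ) (x : ℝ) : bern n k x = (bernsteinPolynomial ℝ n k).eval x := by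
  simp [bern, bernsteinPolynomial]

@[fun_prop]
lemma continuous_bern (n k : ℕ) : Continuous (bern n k) := by
  unfold bern; fun_prop

lemma bern_nonneg (n k : ℕ) {x : ℝ} (hx : x ∈ Icc (0 : ℝ) 1) : 0 ≤ bern n k x :=
  mul_nonneg (mul_nonneg (by positivity) (pow_nonneg hx.1 _)) (pow_nonneg (sub_nonneg.2 hx.2) _)

lemma sum_bern (n : ℕ) (x : ℝ) : ∑ k ∈ range (n + 1), bern n k x = 1 := by
  simp_rw [bern_eq_eval, ← Polynomial.eval_finsetSum, bernsteinPolynomial.sum, Polynomial.eval_one]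

lemma bern_succ_self (n : ℕ) (x : ℝ) : bern n (n + 1) x = 0 := by
  simp [bern]

lemma hasDerivAt_bern_succ_succ (n k : ℕ) (x : ℝ) :
    HasDerivAt (bern (n + 1) (k + 1)) ((n + 1) * (bern n k x - bern n (k + 1) x)) x := by
  simp_rw [funext (bern_eq_eval (n + 1) (k + 1)), bern_eq_eval]
  simpa [bernsteinPolynomial.derivative_succ_aux] using
    (bernsteinPolynomial ℝ (n + 1) (k + 1)).hasDerivAt x

lemma hasDerivAt_bern_succ_zero (n : ℕ) (x : ℝ) :
    HasDerivAt (bern (n + 1) 0) (-(n + 1) * bern n 0 x) x := by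
  simp_rw [funext (bern_eq_eval (n + 1) 0), bern_eq_eval]
  simpa [bernsteinPolynomial.derivative_zero] using
    (bernsteinPolynomial ℝ (n + 1) 0).hasDerivAt x

lemma mul_bern (n k : ℕ) (t : ℝ) :
    t * bern n k t = (k + 1) / (n + 1) * bern (n + 1) (k + 1) t := by
  have h : ((n + 1 : ℕ) : ℝ) * n.choose k = (n + 1).choose (k + 1) * (k + 1 : ℕ) := by
    exact_mod_cast Nat.add_one_mul_choose_eq n k
  push_cast at h
  simp only [bern, Nat.add_sub_add_right]
  field_simp
  linear_combination t ^ (k + 1) * (1 - t) ^ (n - k) * h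

/-- Integration by parts against `p_{n+1,k+1}`, which vanishes at both endpoints. -/
lemma integral_bern_succ_mul_sub {n k : ℕ} (hk : k < n) {g : ℝ → ℝ} (hg : ContDiff ℝ 1 g) :
    (∫ t in (0:ℝ)..1, bern n (k + 1) t * g t) - ∫ t in (0:ℝ)..1, bern n k t * g t
      = ((n : ℝ) + 1)⁻¹ * ∫ t in (0:ℝ)..1, bern (n + 1) (k + 1) t * deriv g t := by
  have hgc : Continuous g := hg.continuous
  have hg' : Continuous (deriv g) := hg.continuous_deriv le_rfl
  have hparts := integral_mul_deriv_eq_deriv_mul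
    (fun t _ => hasDerivAt_bern_succ_succ n k t)
    (fun t _ => (hg.differentiable one_ne_zero t).hasDerivAt)
    ((by fun_prop : Continuous fun t =>
      ((n : ℝ) + 1) * (bern n k t - bern n (k + 1) t)).intervalIntegrable 0 1)
    (hg'.intervalIntegrable 0 1)
  have h0 : bern (n + 1) (k + 1) 0 = 0 := by simp [bern]
  have h1 : bern (n + 1) (k + 1) 1 = 0 := by simp [bern, Nat.sub_ne_zero_of_lt hk]
  simp only [h0, h1, zero_mul, sub_zero, zero_sub, mul_assoc, sub_mul] at hparts
  rw [integral_const_mul, integral_sub ((by fun_prop : Continuous _).intervalIntegrable _ _)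
    ((by fun_prop : Continuous _).intervalIntegrable _ _)] at hparts
  rw [hparts]
  field_simp
  ring

lemma integral_bern {n k : ℕ} (hk : k ≤ n) : ∫ t in (0:ℝ)..1, bern n k t = ((n : ℝ) + 1)⁻¹ := by
  -- integrating by parts against `g = 1` shows that all `∫ p_{n,k}` agree; they sum to `1`
  have hconst : ∀ k ≤ n, ∫ t in (0:ℝ)..1, bern n k t = ∫ t in (0:ℝ)..1, bern n 0 t := by
    intro k hk
    induction k with
    | zero => rfl
    | succ k ih =>
      have h := integral_bern_succ_mul_sub (g := fun _ => 1) hk contDiff_const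
      simp only [mul_one, deriv_const, mul_zero, integral_zero] at h
      rw [← ih (by omega)]
      linarith
  have hsum : ∑ k ∈ range (n + 1), ∫ t in (0:ℝ)..1, bern n k t = 1 := by
    rw [← integral_finsetSum fun k _ => (continuous_bern n k).intervalIntegrable 0 1]
    simp [sum_bern]
  rw [sum_congr rfl fun k hk => hconst k (by simpa [Nat.lt_succ_iff] using hk)] at hsum
  rw [hconst k hk]
  exact eq_inv_of_mul_eq_one_left (by simpa [mul_comm] using hsum)

lemma integral_mul_bern {n k : ℕ} (hk : k ≤ n) :
    ∫ t in (0:ℝ)..1, t * bern n k t = (k + 1) / ((n + 1) * (n + 2)) := by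
  simp_rw [mul_bern, integral_const_mul, integral_bern (Nat.succ_le_succ hk)]
  push_cast
  field_simp
  ring

lemma integral_sq_mul_bern {n k : ℕ} (hk : k ≤ n) :
    ∫ t in (0:ℝ)..1, t ^ 2 * bern n k t = (k + 1) * (k + 2) / ((n + 1) * (n + 2) * (n + 3)) := by
  simp_rw [sq, mul_assoc, mul_bern n k, mul_left_comm _ ((k + 1 : ℝ) / _), integral_const_mul,
    integral_mul_bern (Nat.succ_le_succ hk)]
  push_cast
  field_simp
  ring

/-- The barycentre `∫ t p_{n,k}(t) dt / ∫ p_{n,k}(t) dt` of the Bernstein basis polynomial. -/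
noncomputable def bernMean (n k : ℕ) : ℝ := (k + 1) / (n + 2)

lemma bernMean_mem_Icc {n k : ℕ} (hk : k ≤ n) : bernMean n k ∈ Icc (0 : ℝ) 1 := by
  have : (k : ℝ) ≤ n := by exact_mod_cast hk
  refine ⟨by unfold bernMean; positivity, ?_⟩
  rw [bernMean, div_le_one (by positivity)]
  linarith

lemma integral_bern_mul_sub_bernMean {n k : ℕ} (hk : k ≤ n) :
    ∫ t in (0:ℝ)..1, bern n k t * (t - bernMean n k) = 0 := by
  have h : ∀ t, bern n k t * (t - bernMean n k) = t * bern n k t - bernMean n k * bern n k t :=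
    fun t => by ring
  simp_rw [h]
  rw [integral_sub ((by fun_prop : Continuous _).intervalIntegrable _ _)
    ((by fun_prop : Continuous _).intervalIntegrable _ _), integral_const_mul,
    integral_mul_bern hk, integral_bern hk, bernMean]
  field_simp
  ring

lemma integral_bern_mul_sq_sub_bernMean {n k : ℕ} (hk : k ≤ n) :
    ∫ t in (0:ℝ)..1, bern n k t * (t - bernMean n k) ^ 2
      = bernMean n k * (1 - bernMean n k) / ((n + 1) * (n + 3)) := by
  have h : ∀ t, bern n k t * (t - bernMean n k) ^ 2
      = t ^ 2 * bern n k t - (2 * bernMean n k) * (t * bern n k t)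
        + bernMean n k ^ 2 * bern n k t := fun t => by ring
  simp_rw [h]
  rw [integral_add ((by fun_prop : Continuous _).intervalIntegrable _ _)
      ((by fun_prop : Continuous _).intervalIntegrable _ _),
    integral_sub ((by fun_prop : Continuous _).intervalIntegrable _ _)
      ((by fun_prop : Continuous _).intervalIntegrable _ _),
    integral_const_mul, integral_const_mul, integral_sq_mul_bern hk, integral_mul_bern hk,
    integral_bern hk, bernMean]
  field_simp
  ring

lemma abs_sub_sub_deriv_mul_le {g : ℝ → ℝ} (hg : ContDiff ℝ 2 g) {s : Set ℝ}
    (hs : s.OrdConnected) {M : ℝ} (hM : ∀ y ∈ s, |iteratedDeriv 2 g y| ≤ M) {a x : ℝ}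
    (ha : a ∈ s) (hx : x ∈ s) :
    |g x - g a - deriv g a * (x - a)| ≤ M / 2 * (x - a) ^ 2 := by
  rcases eq_or_ne a x with rfl | hax
  · simp
  obtain ⟨y, hy, hrem⟩ := taylor_mean_remainder_lagrange_iteratedDeriv hax hg.contDiffOn
  have htaylor : taylorWithinEval g 1 (uIcc a x) a x = g a + deriv g a * (x - a) := by
    rw [← (hg.differentiable two_ne_zero a).derivWithin (uniqueDiffOn_uIcc hax a left_mem_uIcc)]
    simp [taylorWithinEval_succ, taylor_within_zero_eval]
    ring
  have hys : y ∈ s := hs.uIcc_subset ha hx (uIoo_subset_uIcc_self hy)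
  rw [sub_sub, ← htaylor, hrem, abs_div, abs_mul, abs_pow, sq_abs]
  norm_num
  nlinarith [mul_le_mul_of_nonneg_right (hM y hys) (sq_nonneg (x - a))]

lemma mul_integral_bern_mul_sub_bernMean {n k : ℕ} (hk : k ≤ n) {g : ℝ → ℝ} (hg : Continuous g)
    (c : ℝ) :
    (n + 1) * (∫ t in (0:ℝ)..1, bern n k t * g t) - g (bernMean n k)
      = (n + 1) * ∫ t in (0:ℝ)..1,
          bern n k t * (g t - g (bernMean n k) - c * (t - bernMean n k)) := by
  have h : ∀ t, bern n k t * (g t - g (bernMean n k) - c * (t - bernMean n k))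
      = bern n k t * g t
        - (g (bernMean n k) * bern n k t + c * (bern n k t * (t - bernMean n k))) :=
    fun t => by ring
  simp_rw [h]
  rw [integral_sub ((by fun_prop : Continuous _).intervalIntegrable _ _)
      ((by fun_prop : Continuous _).intervalIntegrable _ _),
    integral_add ((by fun_prop : Continuous _).intervalIntegrable _ _)
      ((by fun_prop : Continuous _).intervalIntegrable _ _),
    integral_const_mul, integral_const_mul, integral_bern hk, integral_bern_mul_sub_bernMean hk]
  field_simp
  ring

lemma abs_mul_integral_bern_mul_sub_bernMean_le {n k : ℕ} (hk : k ≤ n) {g : ℝ → ℝ}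
    (hg : ContDiff ℝ 2 g) {M : ℝ} (hM : ∀ y ∈ Icc (0 : ℝ) 1, |iteratedDeriv 2 g y| ≤ M) :
    |(n + 1) * (∫ t in (0:ℝ)..1, bern n k t * g t) - g (bernMean n k)| ≤ M / (8 * (n + 3)) := by
  rw [mul_integral_bern_mul_sub_bernMean hk hg.continuous (deriv g (bernMean n k))]
  set μ := bernMean n k
  have hμ : μ ∈ Icc (0 : ℝ) 1 := bernMean_mem_Icc hk
  set R : ℝ → ℝ := fun t => g t - g μ - deriv g μ * (t - μ)
  have hR : Continuous R := by have := hg.continuous; fun_prop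
  have hR_le : ∀ t ∈ Icc (0 : ℝ) 1, |bern n k t * R t| ≤ bern n k t * (M / 2 * (t - μ) ^ 2) :=
    fun t ht => by
      rw [abs_mul, abs_of_nonneg (bern_nonneg n k ht)]
      exact mul_le_mul_of_nonneg_left (abs_sub_sub_deriv_mul_le hg ordConnected_Icc hM hμ ht)
        (bern_nonneg n k ht)
  have hint :
      |∫ t in (0:ℝ)..1, bern n k t * R t| ≤ M / 2 * (μ * (1 - μ) / ((n + 1) * (n + 3))) :=
    calc |∫ t in (0:ℝ)..1, bern n k t * R t|
        ≤ ∫ t in (0:ℝ)..1, bern n k t * (M / 2 * (t - μ) ^ 2) := by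
          refine (abs_integral_le_integral_abs zero_le_one).trans
            (integral_mono_on zero_le_one ((by fun_prop : Continuous _).intervalIntegrable _ _)
              ((by fun_prop : Continuous _).intervalIntegrable _ _) hR_le)
      _ = M / 2 * (μ * (1 - μ) / ((n + 1) * (n + 3))) := by
          simp_rw [mul_left_comm (bern n k _)]
          rw [integral_const_mul, integral_bern_mul_sq_sub_bernMean hk]
  have hM0 : 0 ≤ M := (abs_nonneg _).trans (hM 0 ⟨le_rfl, zero_le_one⟩)
  have hvar : μ * (1 - μ) ≤ 1 / 4 := by nlinarith [sq_nonneg (μ - 1 / 2)]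
  rw [abs_mul, abs_of_pos (by positivity)]
  calc (n + 1 : ℝ) * |∫ t in (0:ℝ)..1, bern n k t * R t|
      ≤ (n + 1) * (M / 2 * (μ * (1 - μ) / ((n + 1) * (n + 3)))) := by gcongr
    _ = M / 2 * (μ * (1 - μ)) / (n + 3) := by field_simp
    _ ≤ M / 2 * (1 / 4) / (n + 3) := by gcongr
    _ = M / (8 * (n + 3)) := by field_simp; ring

lemma hasDerivAt_sum_bern_mul (n : ℕ) (c : ℕ → ℝ) (x : ℝ) :
    HasDerivAt (fun x => ∑ k ∈ range (n + 2), bern (n + 1) k x * c k)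
      ((n + 1) * ∑ k ∈ range (n + 1), bern n k x * (c (k + 1) - c k)) x := by
  have hderiv := HasDerivAt.fun_sum (u := range (n + 2)) (x := x)
    (A := fun k x => bern (n + 1) k x * c k)
    (A' := fun k => (if k = 0 then -(n + 1) * bern n 0 x
      else (n + 1) * (bern n (k - 1) x - bern n k x)) * c k) fun k _ => by
    rcases k with _ | k
    · simpa using (hasDerivAt_bern_succ_zero n x).mul_const (c 0)
    · simpa using (hasDerivAt_bern_succ_succ n k x).mul_const (c (k + 1))
  refine hderiv.congr_deriv ?_
  have htel : ∑ k ∈ range (n + 1), bern n (k + 1) x * c (k + 1)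
      = ∑ k ∈ range (n + 1), bern n k x * c k - bern n 0 x * c 0 := by
    rw [eq_sub_iff_add_eq, ← sum_range_succ' (fun k => bern n k x * c k), sum_range_succ,
      bern_succ_self, zero_mul, add_zero]
  rw [sum_range_succ' _ (n + 1)]
  simp only [Nat.add_one_ne_zero, if_false, if_true, Nat.add_sub_cancel]
  have hsplit : ∑ k ∈ range (n + 1), (n + 1) * (bern n k x - bern n (k + 1) x) * c (k + 1)
      = (n + 1) * (∑ k ∈ range (n + 1), bern n k x * c (k + 1)
        - ∑ k ∈ range (n + 1), bern n (k + 1) x * c (k + 1)) := by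
    rw [← sum_sub_distrib, mul_sum]
    exact sum_congr rfl fun _ _ => by ring
  simp_rw [hsplit, htel, mul_sub, sum_sub_distrib]
  ring

lemma ContDiff.iteratedDeriv_of_add {f : ℝ → ℝ} {m k : ℕ} (hf : ContDiff ℝ (m + k : ℕ) f) :
    ContDiff ℝ m (iteratedDeriv k f) := by
  rw [iteratedDeriv_eq_iterate]
  exact hf.iterate_deriv' m k

lemma iteratedDeriv_iteratedDeriv (m k : ℕ) (f : ℝ → ℝ) :
    iteratedDeriv m (iteratedDeriv k f) = iteratedDeriv (m + k) f := by
  simp only [iteratedDeriv_eq_iterate, Function.iterate_add_apply]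

/-- `durrmeyer n g = (n + 1) * durrmeyerSum n n 0 g`; differentiating moves `(a, b, s)` to
`(a - 1, b + 1, s + 1)`. -/
noncomputable def durrmeyerSum (a b s : ℕ) (g : ℝ → ℝ) (x : ℝ) : ℝ :=
  ∑ j ∈ range (a + 1), bern a j x * ∫ t in (0:ℝ)..1, bern b (j + s) t * g t

lemma hasDerivAt_durrmeyerSum {a b s : ℕ} (hab : a + s < b) {g : ℝ → ℝ} (hg : ContDiff ℝ 1 g)
    (x : ℝ) :
    HasDerivAt (durrmeyerSum (a + 1) b s g)
      ((a + 1) / (b + 1) * durrmeyerSum a (b + 1) (s + 1) (deriv g) x) x := by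
  refine (hasDerivAt_sum_bern_mul a _ x).congr_deriv ?_
  rw [durrmeyerSum, mul_sum, mul_sum]
  refine sum_congr rfl fun j hj => ?_
  have hjs : j + s < b := by simp at hj; omega
  rw [Nat.add_right_comm, integral_bern_succ_mul_sub hjs hg, Nat.add_assoc]
  field_simp

lemma iteratedDeriv_durrmeyer {n r : ℕ} (hr : r ≤ n) {f : ℝ → ℝ} (hf : ContDiff ℝ r f) :
    iteratedDeriv r (durrmeyer n f) = fun x =>
      ((n + 1) * n.descFactorial r / (n + 1).ascFactorial r : ℝ)
        * durrmeyerSum (n - r) (n + r) r (iteratedDeriv r f) x := by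
  induction r with
  | zero =>
    funext x
    simp [durrmeyer, durrmeyerSum]
  | succ r ih =>
    have hderiv := hasDerivAt_durrmeyerSum (a := n - r - 1) (b := n + r) (s := r) (by omega)
      (ContDiff.iteratedDeriv_of_add (m := 1) (k := r) (hf.of_le (by norm_cast; omega)))
    funext x
    rw [iteratedDeriv_succ, ih (by omega) hf.of_succ, show n - r = n - r - 1 + 1 by omega,
      ((hderiv x).const_mul _).deriv, ← iteratedDeriv_succ, Nat.descFactorial_succ,
      Nat.ascFactorial_succ, show n - r - 1 = n - (r + 1) by omega, Nat.add_assoc]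
    have hasc : ((n + 1).ascFactorial r : ℝ) ≠ 0 := by positivity
    push_cast [Nat.cast_sub hr, Nat.cast_sub (hr.trans' r.le_succ)]
    field_simp
    ring

lemma factorial_ratio_mul_descFactorial_div_ascFactorial {n r : ℕ} (hr : r ≤ n) :
    ((n + r + 1)! : ℝ) * (n - r)! / ((n + 1)! * n !)
      * ((n + 1) * n.descFactorial r / (n + 1).ascFactorial r) = n + r + 1 := by
  have hdesc : ((n - r)! : ℝ) * n.descFactorial r = n ! := by
    exact_mod_cast Nat.factorial_mul_descFactorial hr
  have hasc : (n ! : ℝ) * (n + 1).ascFactorial r = (n + r)! := by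
    exact_mod_cast Nat.factorial_mul_ascFactorial n r
  have hasc0 : ((n + 1).ascFactorial r : ℝ) ≠ 0 := by positivity
  rw [Nat.factorial_succ (n + r), Nat.factorial_succ n]
  push_cast
  field_simp
  linear_combination ((n + r)! : ℝ) * hdesc - (n ! : ℝ) * hasc

lemma abs_sum_bern_mul_le {n : ℕ} {x : ℝ} (hx : x ∈ Icc (0 : ℝ) 1) {c : ℕ → ℝ} {B : ℝ}
    (hc : ∀ k ≤ n, |c k| ≤ B) : |∑ k ∈ range (n + 1), bern n k x * c k| ≤ B :=
  calc |∑ k ∈ range (n + 1), bern n k x * c k|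
      ≤ ∑ k ∈ range (n + 1), bern n k x * B := by
        refine (abs_sum_le_sum_abs _ _).trans (sum_le_sum fun k hk => ?_)
        rw [abs_mul, abs_of_nonneg (bern_nonneg n k hx)]
        exact mul_le_mul_of_nonneg_left (hc k (Nat.lt_succ_iff.1 (mem_range.1 hk)))
          (bern_nonneg n k hx)
    _ = B := by rw [← sum_mul, sum_bern, one_mul]

lemma abs_bernMean_sub_bernMean_le {n r k : ℕ} (hr : r ≤ n) (hk : k ≤ n - r) :
    |bernMean (n + r) (k + r) - bernMean (n - r) k|
      ≤ r * (n - r) / ((n + 2) ^ 2 - r ^ 2) := by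
  have hrn : (r : ℝ) ≤ n := by exact_mod_cast hr
  have hkr : (k : ℝ) ≤ n - r := by rw [← Nat.cast_sub hr]; exact_mod_cast hk
  have hden : (0 : ℝ) < (n + 2) ^ 2 - r ^ 2 := by nlinarith
  have hdiff : bernMean (n + r) (k + r) - bernMean (n - r) k
      = r * (n - r - 2 * k) / ((n + 2) ^ 2 - r ^ 2) := by
    have : (n : ℝ) - r + 2 ≠ 0 := by linarith
    rw [bernMean, bernMean]
    push_cast [Nat.cast_sub hr]
    field_simp
    ring
  rw [hdiff, abs_div, abs_of_pos hden, abs_mul, Nat.abs_cast]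
  gcongr
  exact abs_le.2 ⟨by linarith, by linarith⟩

lemma le_supNorm {h : ℝ → ℝ} (hc : ContinuousOn h (Icc 0 1)) {t : ℝ} (ht : t ∈ Icc (0 : ℝ) 1) :
    |h t| ≤ supNorm h := by
  have hb := isCompact_Icc.bddAbove_image hc.abs
  rw [image_eq_range] at hb
  exact le_ciSup hb ⟨t, ht⟩

lemma le_modCont {h : ℝ → ℝ} (hc : ContinuousOn h (Icc 0 1)) {x y δ : ℝ}
    (hx : x ∈ Icc (0 : ℝ) 1) (hy : y ∈ Icc (0 : ℝ) 1) (hxy : |x - y| ≤ δ) :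
    |h x - h y| ≤ modCont h δ := by
  obtain ⟨C, hC⟩ := isCompact_Icc.bddAbove_image hc.abs
  refine le_csSup ⟨2 * C, ?_⟩ ⟨x, hx, y, hy, hxy, rfl⟩
  rintro d ⟨u, hu, v, hv, -, rfl⟩
  linarith [abs_sub (h u) (h v), hC (mem_image_of_mem _ hu), hC (mem_image_of_mem _ hv)]

lemma abs_sub_durrmeyer_coeff_le {n r k : ℕ} (hr : r ≤ n) (hk : k ≤ n - r) {g : ℝ → ℝ}
    (hg : ContDiff ℝ 2 g) {M : ℝ} (hM : ∀ y ∈ Icc (0 : ℝ) 1, |iteratedDeriv 2 g y| ≤ M) :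
    |((n + r : ℕ) + 1) * (∫ t in (0:ℝ)..1, bern (n + r) (k + r) t * g t)
        - ((n - r : ℕ) + 1) * ∫ t in (0:ℝ)..1, bern (n - r) k t * g t|
      ≤ M / (8 * ((n + r : ℕ) + 3)) + M / (8 * ((n - r : ℕ) + 3))
        + modCont g (r * (n - r) / ((n + 2) ^ 2 - r ^ 2)) := by
  set A := ((n + r : ℕ) + 1 : ℝ) * ∫ t in (0:ℝ)..1, bern (n + r) (k + r) t * g t
  set B := ((n - r : ℕ) + 1 : ℝ) * ∫ t in (0:ℝ)..1, bern (n - r) k t * g t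
  set μ₁ := bernMean (n + r) (k + r)
  set μ₂ := bernMean (n - r) k
  have hk' : k + r ≤ n + r := by omega
  have hA := abs_mul_integral_bern_mul_sub_bernMean_le hk' hg hM
  have hB := abs_mul_integral_bern_mul_sub_bernMean_le hk hg hM
  have hAB := le_modCont hg.continuous.continuousOn (bernMean_mem_Icc hk')
    (bernMean_mem_Icc hk) (abs_bernMean_sub_bernMean_le hr hk)
  calc |A - B| ≤ |A - g μ₁| + (|g μ₁ - g μ₂| + |g μ₂ - B|) :=
        (abs_sub_le _ _ _).trans (by gcongr; exact abs_sub_le _ _ _)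
    _ ≤ _ := by rw [abs_sub_comm _ B]; linarith

theorem durrmeyer_derivative_difference_normalized_general
    (n r : ℕ) (hr2 : r ≤ n)
    (f : ℝ → ℝ) (hf : ContDiff ℝ (r + 2 : ℕ) f) :
    ∀ x ∈ Set.Icc (0:ℝ) 1,
      |((n + r + 1).factorial : ℝ) * ((n - r).factorial : ℝ) /
            (((n + 1).factorial : ℝ) * (n.factorial : ℝ)) *
            iteratedDeriv r (durrmeyer n f) x
          - durrmeyer (n - r) (iteratedDeriv r f) x| ≤
        (1 / 4) * supNorm (iteratedDeriv (r + 2) f) *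
            (((n : ℝ) + 3) / (((n : ℝ) + 3) ^ 2 - (r : ℝ) ^ 2))
          + modCont (iteratedDeriv r f)
              ((r : ℝ) * ((n : ℝ) - (r : ℝ)) / (((n : ℝ) + 2) ^ 2 - (r : ℝ) ^ 2)) := by
  intro x hx
  set g := iteratedDeriv r f
  have hg : ContDiff ℝ 2 g := ContDiff.iteratedDeriv_of_add (by rwa [add_comm])
  have hM : ∀ y ∈ Icc (0 : ℝ) 1, |iteratedDeriv 2 g y| ≤ supNorm (iteratedDeriv (r + 2) f) :=
    fun y hy => by
      rw [iteratedDeriv_iteratedDeriv, add_comm]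
      exact le_supNorm (hf.continuous_iteratedDeriv' _).continuousOn hy
  have hdiff : ((n + r + 1)! : ℝ) * (n - r)! / ((n + 1)! * n !)
        * iteratedDeriv r (durrmeyer n f) x - durrmeyer (n - r) g x
      = ∑ k ∈ range (n - r + 1), bern (n - r) k x *
        (((n + r : ℕ) + 1) * (∫ t in (0:ℝ)..1, bern (n + r) (k + r) t * g t)
          - ((n - r : ℕ) + 1) * ∫ t in (0:ℝ)..1, bern (n - r) k t * g t) := by
    rw [iteratedDeriv_durrmeyer hr2 (hf.of_le (by norm_cast; omega)), ← mul_assoc,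
      factorial_ratio_mul_descFactorial_div_ascFactorial hr2, durrmeyer, durrmeyerSum, mul_sum,
      mul_sum, ← sum_sub_distrib]
    exact sum_congr rfl fun k _ => by push_cast; ring
  rw [hdiff]
  refine (abs_sum_bern_mul_le hx fun k hk =>
    abs_sub_durrmeyer_coeff_le hr2 hk hg hM).trans_eq ?_
  have hrn : (r : ℝ) ≤ n := by exact_mod_cast hr2
  have h₁ : (n : ℝ) - r + 3 ≠ 0 := by linarith
  have h₂ : ((n : ℝ) + 3) ^ 2 - r ^ 2 ≠ 0 := by nlinarith
  push_cast [Nat.cast_sub hr2]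
  field_simp
  ring

theorem durrmeyer_derivative_difference_normalized
    (n r : ℕ) (hr1 : 1 ≤ r) (hr2 : r ≤ n)
    (f : ℝ → ℝ) (hf : ContDiff ℝ (r + 2 : ℕ) f) :
    ∀ x ∈ Set.Icc (0:ℝ) 1,
      |((n + r + 1).factorial : ℝ) * ((n - r).factorial : ℝ) /
            (((n + 1).factorial : ℝ) * (n.factorial : ℝ)) *
            iteratedDeriv r (durrmeyer n f) x
          - durrmeyer (n - r) (iteratedDeriv r f) x| ≤
        (1 / 4) * supNorm (iteratedDeriv (r + 2) f) *
            (((n : ℝ) + 3) / (((n : ℝ) + 3) ^ 2 - (r : ℝ) ^ 2))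
          + modCont (iteratedDeriv r f)
              ((r : ℝ) * ((n : ℝ) - (r : ℝ)) / (((n : ℝ) + 2) ^ 2 - (r : ℝ) ^ 2)) :=
  durrmeyer_derivative_difference_normalized_general n r hr2 f hf
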